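/- arXiv:1401.6579 — 9 statements merged into one kernel-verified Lean document; each statement's English description precedes it below -/
import Mathlib

section
/- Let R = F_1 × ... × F_n be a finite product of finite fields with n ≥ 2, R not isomorphic to Z/2 × Z/2. In the Jacobson graph of R (vertices R \ {0}, x ~ y iff x ≠ y and 1 - x*y is not a unit), two vertices x and y have equal open neighborhoods N(x) = N(y) if and only if x = y. -/
/-- The Jacobson graph of a product of fields: vertices are the nonzero
elements, two distinct vertices are adjacent iff `1 - x*y` is not a unit. -/
def jacGraph {ι : Type*} (F : ι → Type*) [∀ i, Field (F i)] :
    SimpleGraph {x : ∀ i, F i // x ≠ 0} where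
  Adj x y := x ≠ y ∧ ¬ IsUnit (1 - (x : ∀ i, F i) * y)
  symm := by
    constructor
    rintro x y ⟨hxy, hu⟩
    exact ⟨hxy.symm, by rwa [mul_comm]⟩
  loopless := by constructor; rintro x ⟨h, _⟩; exact h rfl

/-!
A vertex `x` of the Jacobson graph of `∏ Fᵢ` is adjacent to `w` iff `xᵢ wᵢ = 1` for some `i`.
If `N(x) = N(y)` but `xᵢ ≠ yᵢ` with `xᵢ ≠ 0`, probing with the vertex `single i xᵢ⁻¹` forces
`x = single i a` with `a² = 1`, and then `y = single k b` with `b² = 1` as well. The neighbours of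
`single i a` are exactly the other vertices with `i`-th coordinate `a`; probing these two
neighbourhoods with `single i a + single j c` shows that the only indices are `i ≠ k` and that
`F i` and `F k` have no nonzero elements besides `a` and `b`, i.e. the ring is `𝔽₂ × 𝔽₂`.
-/

theorem nonempty_ringEquiv_zmod_two {K : Type*} [Field K] (hK : ∀ c : K, c = 0 ∨ c = 1) :
    Nonempty (ZMod 2 ≃+* K) := by
  have two_eq_zero : (2 : K) = 0 :=
    (hK 2).resolve_right fun h => (one_ne_zero : (1 : K) ≠ 0) (by linear_combination h)
  have := CharTwo.of_one_ne_zero_of_two_eq_zero one_ne_zero two_eq_zero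
  let f := ZMod.castHom (dvd_refl 2) K
  refine ⟨RingEquiv.ofBijective f ⟨f.injective, fun c => ?_⟩⟩
  rcases hK c with rfl | rfl
  exacts [⟨0, map_zero f⟩, ⟨1, map_one f⟩]

theorem nonempty_pi_fin_two_ringEquiv {F : Fin 2 → Type*} [∀ i, Field (F i)]
    (hF : ∀ i (c : F i), c = 0 ∨ c = 1) :
    Nonempty ((∀ i, F i) ≃+* ZMod 2 × ZMod 2) := by
  obtain ⟨e₀⟩ := nonempty_ringEquiv_zmod_two (hF 0)
  obtain ⟨e₁⟩ := nonempty_ringEquiv_zmod_two (hF 1)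
  exact ⟨(RingEquiv.piFinTwo F).trans (e₀.symm.prodCongr e₁.symm)⟩

section

variable {ι : Type*} {F : ι → Type*} [∀ i, Field (F i)] {x y : {x : ∀ i, F i // x ≠ 0}}

theorem jacGraph_adj :
    (jacGraph F).Adj x y ↔ x ≠ y ∧ ∃ i, (x : ∀ i, F i) i * (y : ∀ i, F i) i = 1 := by
  simp only [jacGraph, Pi.isUnit_iff, isUnit_iff_ne_zero, not_forall, not_not, Pi.sub_apply,
    Pi.one_apply, Pi.mul_apply, sub_eq_zero, eq_comm (a := (1 : F _))]

variable [DecidableEq ι]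

theorem jacGraph_exists_eq_single_of_neighborSet_subset
    (h : (jacGraph F).neighborSet x ⊆ (jacGraph F).neighborSet y) {i : ι}
    (hx : (x : ∀ i, F i) i ≠ 0) (hxy : (x : ∀ i, F i) i ≠ (y : ∀ i, F i) i) :
    ∃ a : F i, a * a = 1 ∧ (x : ∀ i, F i) = Pi.single i a := by
  let z : {x : ∀ i, F i // x ≠ 0} :=
    ⟨Pi.single i ((x : ∀ i, F i) i)⁻¹, Pi.single_ne_zero_iff.2 (inv_ne_zero hx)⟩
  by_cases hzx : z = x
  · have hxz : (x : ∀ i, F i) = Pi.single i ((x : ∀ i, F i) i)⁻¹ :=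
      congrArg Subtype.val hzx.symm
    have hxi : (x : ∀ i, F i) i = ((x : ∀ i, F i) i)⁻¹ := by
      conv_lhs => rw [hxz]
      exact Pi.single_eq_same _ _
    refine ⟨_, ?_, hxz⟩
    nth_rw 1 [← hxi]
    exact mul_inv_cancel₀ hx
  · have hxz : (jacGraph F).Adj x z :=
      jacGraph_adj.2 ⟨Ne.symm hzx, i, by simp [z, hx]⟩
    obtain ⟨-, j, hj⟩ := jacGraph_adj.1 (h hxz)
    obtain rfl : j = i := by
      by_contra hji
      simp [z, Pi.single_eq_of_ne hji] at hj
    simp only [z, Pi.single_eq_same, mul_inv_eq_one₀ hx] at hj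
    exact absurd hj.symm hxy

theorem jacGraph_mem_neighborSet_of_eq_single {w : {x : ∀ i, F i // x ≠ 0}} {i : ι} {a : F i}
    (ha : a * a = 1) (hx : (x : ∀ i, F i) = Pi.single i a) :
    w ∈ (jacGraph F).neighborSet x ↔ x ≠ w ∧ (w : ∀ i, F i) i = a := by
  have ha_inv : a⁻¹ = a := inv_eq_of_mul_eq_one_right ha
  rw [SimpleGraph.mem_neighborSet, jacGraph_adj, hx]
  refine and_congr_right fun _ => ⟨fun ⟨j, hj⟩ => ?_, fun hw => ⟨i, by simpa [hw] using ha⟩⟩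
  obtain rfl : j = i := by
    by_contra hji
    simp [Pi.single_eq_of_ne hji] at hj
  rw [Pi.single_eq_same, mul_eq_one_iff_inv_eq₀ (left_ne_zero_of_mul_eq_one ha), ha_inv] at hj
  exact hj.symm

theorem jacGraph_exists_eq_single_of_neighborSet_eq
    (h : (jacGraph F).neighborSet x = (jacGraph F).neighborSet y) (hxy : x ≠ y) :
    ∃ i, ∃ a : F i, a * a = 1 ∧ (x : ∀ i, F i) = Pi.single i a ∧
      ∃ k, ∃ b : F k, b * b = 1 ∧ (y : ∀ i, F i) = Pi.single k b := by
  obtain ⟨i, hi⟩ := Function.ne_iff.1 (Subtype.coe_ne_coe.2 hxy)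
  wlog hx : (x : ∀ i, F i) i ≠ 0 generalizing x y
  · obtain ⟨k, b, hb, hyb, i, a, ha, hxa⟩ := this h.symm (Ne.symm hxy) (Ne.symm hi)
      (fun hy => hi (not_not.1 hx ▸ hy.symm))
    exact ⟨i, a, ha, hxa, k, b, hb, hyb⟩
  obtain ⟨a, ha, hxa⟩ := jacGraph_exists_eq_single_of_neighborSet_subset h.subset hx hi
  obtain ⟨k, hk⟩ := Function.ne_iff.1 y.2
  have hyx : (y : ∀ i, F i) k ≠ (x : ∀ i, F i) k := by
    by_cases hki : k = i
    · exact hki ▸ Ne.symm hi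
    · simpa [hxa, Pi.single_eq_of_ne hki] using hk
  obtain ⟨b, hb, hyb⟩ := jacGraph_exists_eq_single_of_neighborSet_subset h.superset hk hyx
  exact ⟨i, a, ha, hxa, k, b, hb, hyb⟩

theorem jacGraph_ne_and_single_apply_of_neighborSet_subset {i k : ι} {a : F i} {b : F k}
    (ha : a * a = 1) (hxa : (x : ∀ i, F i) = Pi.single i a)
    (hb : b * b = 1) (hyb : (y : ∀ i, F i) = Pi.single k b)
    (h : (jacGraph F).neighborSet x ⊆ (jacGraph F).neighborSet y) (hxy : x ≠ y)
    {j : ι} (hji : j ≠ i) {c : F j} (hc : c ≠ 0) :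
    k ≠ i ∧ (Pi.single j c : ∀ i, F i) k = b := by
  have hwj : (Pi.single i a + Pi.single j c : ∀ i, F i) j = c := by
    simp [Pi.single_eq_of_ne hji]
  let w : {x : ∀ i, F i // x ≠ 0} :=
    ⟨Pi.single i a + Pi.single j c, fun hw => hc (by rw [← hwj, hw, Pi.zero_apply])⟩
  have hxw : x ≠ w := by
    intro hxw
    have := congrFun (congrArg Subtype.val hxw) j
    rw [hxa, Pi.single_eq_of_ne hji] at this
    exact hc (this.trans hwj).symm
  have hw : w ∈ (jacGraph F).neighborSet x :=
    (jacGraph_mem_neighborSet_of_eq_single ha hxa).2 ⟨hxw, by simp [w, Pi.single_eq_of_ne' hji]⟩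
  have hwk := ((jacGraph_mem_neighborSet_of_eq_single hb hyb).1 (h hw)).2
  by_cases hki : k = i
  · subst hki
    refine absurd (Subtype.ext ?_) hxy
    simpa [hxa, hyb, w, Pi.single_eq_of_ne' hji] using congrArg (Pi.single k) hwk
  · exact ⟨hki, by simpa [w, Pi.single_eq_of_ne hki] using hwk⟩

theorem jacGraph_eq_or_eq_of_neighborSet_subset [Nontrivial ι] {i k : ι} {a : F i} {b : F k}
    (ha : a * a = 1) (hxa : (x : ∀ i, F i) = Pi.single i a)
    (hb : b * b = 1) (hyb : (y : ∀ i, F i) = Pi.single k b)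
    (h : (jacGraph F).neighborSet x ⊆ (jacGraph F).neighborSet y) (hxy : x ≠ y) :
    (∀ j, j = i ∨ j = k) ∧ ∀ c : F k, c = 0 ∨ c = b := by
  have probe {j : ι} (hji : j ≠ i) {c : F j} (hc : c ≠ 0) :=
    jacGraph_ne_and_single_apply_of_neighborSet_subset ha hxa hb hyb h hxy hji hc
  refine ⟨fun j => or_iff_not_imp_left.2 fun hji => ?_,
    fun c => or_iff_not_imp_left.2 fun hc => ?_⟩
  · by_contra hjk
    have hb0 : b ≠ 0 := left_ne_zero_of_mul_eq_one hb
    exact hb0 (by simpa [Pi.single_eq_of_ne (Ne.symm hjk)] using (probe hji one_ne_zero).2.symm)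
  · obtain ⟨j, hji⟩ := exists_ne i
    simpa using (probe (probe hji one_ne_zero).1 hc).2

end

theorem jacGraph_neighborSet_eq_iff_general
    {n : ℕ} (F : Fin n → Type*) [∀ i, Field (F i)]
    (hn : 2 ≤ n)
    (hR : ¬ Nonempty ((∀ i, F i) ≃+* (ZMod 2 × ZMod 2)))
    (x y : {x : ∀ i, F i // x ≠ 0}) :
    (jacGraph F).neighborSet x = (jacGraph F).neighborSet y ↔ x = y := by
  refine ⟨fun h => ?_, fun h => h ▸ rfl⟩
  by_contra hxy
  obtain ⟨i, a, ha, hxa, k, b, hb, hyb⟩ := jacGraph_exists_eq_single_of_neighborSet_eq h hxy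
  have : Nontrivial (Fin n) := Fin.nontrivial_iff_two_le.2 hn
  obtain ⟨hall, hFk⟩ :=
    jacGraph_eq_or_eq_of_neighborSet_subset ha hxa hb hyb h.subset hxy
  obtain ⟨-, hFi⟩ :=
    jacGraph_eq_or_eq_of_neighborSet_subset hb hyb ha hxa h.superset (Ne.symm hxy)
  obtain rfl : a = 1 := ((hFi 1).resolve_left one_ne_zero).symm
  obtain rfl : b = 1 := ((hFk 1).resolve_left one_ne_zero).symm
  have hF : ∀ j (c : F j), c = 0 ∨ c = 1 := by
    intro j
    rcases hall j with rfl | rfl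
    exacts [hFi, hFk]
  have hcard : Fintype.card (Fin n) ≤ 2 :=
    (Finset.card_le_card (s := Finset.univ) fun j _ => by simpa using hall j).trans
      (Finset.card_le_two (a := i) (b := k))
  obtain rfl : n = 2 := le_antisymm (by simpa using hcard) hn
  exact hR (nonempty_pi_fin_two_ringEquiv hF)

theorem jacGraph_neighborSet_eq_iff
    {n : ℕ} (F : Fin n → Type*) [∀ i, Field (F i)] [∀ i, Fintype (F i)]
    (hn : 2 ≤ n)
    (hR : ¬ Nonempty ((∀ i, F i) ≃+* (ZMod 2 × ZMod 2)))
    (x y : {x : ∀ i, F i // x ≠ 0}) :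
    (jacGraph F).neighborSet x = (jacGraph F).neighborSet y ↔ x = y :=
  jacGraph_neighborSet_eq_iff_general F hn hR x y
end

section
/- Let R = F_1 × ... × F_n be a finite product of finite fields with n ≥ 2. In the Jacobson graph of R, two vertices x and y have equal closed neighborhoods N[x] = N[y] if and only if x = y. -/
lemma Field.exists_ne_and_mul_ne_one {K : Type*} [Field K] (b : K) : ∃ t, t ≠ b ∧ b * t ≠ 1 := by
  by_cases hb : b = 0
  · exact ⟨1, by simp [hb]⟩
  · exact ⟨0, Ne.symm hb, by simp⟩

namespace jacGraph

variable {ι : Type*} {F : ι → Type*} [∀ i, Field (F i)]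

lemma adj_iff {x y : {x : ∀ i, F i // x ≠ 0}} :
    (jacGraph F).Adj x y ↔ x ≠ y ∧ ∃ i, (x : ∀ i, F i) i * (y : ∀ i, F i) i = 1 := by
  simp only [jacGraph, Pi.isUnit_iff, isUnit_iff_ne_zero, not_forall, not_not, Pi.sub_apply,
    Pi.mul_apply, Pi.one_apply, sub_eq_zero, eq_comm (a := (1 : F _))]

lemma mem_insert_neighborSet {x z : {x : ∀ i, F i // x ≠ 0}} :
    z ∈ insert x ((jacGraph F).neighborSet x) ↔
      z = x ∨ ∃ i, (x : ∀ i, F i) i * (z : ∀ i, F i) i = 1 := by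
  rw [Set.mem_insert_iff, SimpleGraph.mem_neighborSet, adj_iff]
  by_cases hzx : z = x
  · simp [hzx]
  · simp [hzx, Ne.symm hzx]

lemma exists_mem_insert_neighborSet_not_mem {x y : {x : ∀ i, F i // x ≠ 0}} {j k : ι}
    (hkj : k ≠ j) (hxj : (x : ∀ i, F i) j ≠ 0) (hxyj : (x : ∀ i, F i) j ≠ (y : ∀ i, F i) j) :
    ∃ z, z ∈ insert x ((jacGraph F).neighborSet x) ∧
      z ∉ insert y ((jacGraph F).neighborSet y) := by
  classical
  obtain ⟨t, hty, hyt⟩ := Field.exists_ne_and_mul_ne_one ((y : ∀ i, F i) k)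
  set z : ∀ i, F i := Function.update (Pi.single j ((x : ∀ i, F i) j)⁻¹) k t
  have hzj : z j = ((x : ∀ i, F i) j)⁻¹ := by simp [z, hkj.symm]
  have hzk : z k = t := by simp [z]
  have hz_zero : ∀ i, i ≠ j → i ≠ k → z i = 0 := fun i hij hik => by simp [z, hij, hik]
  have hz0 : z ≠ 0 := fun h => inv_ne_zero hxj (by rw [← hzj, h, Pi.zero_apply])
  refine ⟨⟨z, hz0⟩, mem_insert_neighborSet.2 (Or.inr ⟨j, by simp [hzj, hxj]⟩), ?_⟩
  rw [mem_insert_neighborSet, not_or, not_exists]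
  refine ⟨fun h => hty (by rw [← hzk, ← h]), fun i hi => ?_⟩
  change (y : ∀ i, F i) i * z i = 1 at hi
  by_cases hij : i = j
  · subst hij
    exact hxyj (eq_of_mul_inv_eq_one (by rwa [hzj] at hi)).symm
  by_cases hik : i = k
  · subst hik
    exact hyt (by rwa [hzk] at hi)
  · simp [hz_zero i hij hik] at hi

lemma eq_of_insert_neighborSet_eq [Nontrivial ι] {x y : {x : ∀ i, F i // x ≠ 0}}
    (h : insert x ((jacGraph F).neighborSet x) = insert y ((jacGraph F).neighborSet y)) :
    x = y := by
  by_contra hxy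
  obtain ⟨j, hxyj⟩ : ∃ j, (x : ∀ i, F i) j ≠ (y : ∀ i, F i) j := by
    simpa [funext_iff] using Subtype.coe_ne_coe.2 hxy
  obtain ⟨k, hkj⟩ := exists_ne j
  by_cases hxj : (x : ∀ i, F i) j = 0
  · have hyj : (y : ∀ i, F i) j ≠ 0 := hxj ▸ hxyj.symm
    obtain ⟨z, hzy, hzx⟩ := exists_mem_insert_neighborSet_not_mem hkj hyj hxyj.symm
    exact hzx (h ▸ hzy)
  · obtain ⟨z, hzx, hzy⟩ := exists_mem_insert_neighborSet_not_mem hkj hxj hxyj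
    exact hzy (h ▸ hzx)

end jacGraph

theorem jacGraph_closedNeighborSet_eq_iff_general
    {n : ℕ} (F : Fin n → Type*) [∀ i, Field (F i)]
    (hn : 2 ≤ n)
    (x y : {x : ∀ i, F i // x ≠ 0}) :
    insert x ((jacGraph F).neighborSet x) = insert y ((jacGraph F).neighborSet y) ↔
      x = y := by
  have : Nontrivial (Fin n) := Fin.nontrivial_iff_two_le.2 hn
  exact ⟨jacGraph.eq_of_insert_neighborSet_eq, fun h => h ▸ rfl⟩

theorem jacGraph_closedNeighborSet_eq_iff
    {n : ℕ} (F : Fin n → Type*) [∀ i, Field (F i)] [∀ i, Fintype (F i)]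
    (hn : 2 ≤ n)
    (x y : {x : ∀ i, F i // x ≠ 0}) :
    insert x ((jacGraph F).neighborSet x) = insert y ((jacGraph F).neighborSet y) ↔
      x = y :=
  jacGraph_closedNeighborSet_eq_iff_general F hn x y
end

section
/- Let R = F_1 × ... × F_n be a finite product of finite fields, and let x = c·e_i be a vertex supported only at coordinate i with c ≠ 0. Then the open neighborhood of x in the Jacobson graph of R is the coset c⁻¹·e_i + S minus possibly x itself, where S is the set of elements vanishing at coordinate i; in particular deg(x) = |R|/|F_i| - 1 if c² = 1 and deg(x) = |R|/|F_i| if c² ≠ 1. -/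
/-! A vertex supported at a single coordinate `i` meets the non-unit condition `x_j y_j = 1` only
at `j = i`, so its neighbours are the vertices whose `i`-th coordinate is `c⁻¹`, apart from `x`
itself, which is among them exactly when `c = c⁻¹`, i.e. `c ^ 2 = 1`. Counting these vertices
amounts to counting functions with a prescribed value at `i`, of which there are
`|R| / |F_i|`. -/

section
variable {ι : Type*} {F : ι → Type*}

theorem Nat.card_subtype_apply_eq [DecidableEq ι] [Fintype ι] [∀ j, Fintype (F j)] (i : ι)
    (a : F i) :
    Nat.card {f : ∀ j, F j // f i = a} = Fintype.card (∀ j, F j) / Fintype.card (F i) := by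
  classical
  have hfiber : Nat.card {f : ∀ j, F j // f i = a} =
      ∏ j ∈ Finset.univ.erase i, Fintype.card (F j) := by
    rw [Nat.card_eq_fintype_card, Fintype.card_subtype, ← Fintype.piFinset_univ]
    convert Fintype.card_filter_piFinset_eq_of_mem (fun j => Finset.univ) i (Finset.mem_univ a)
    exact Finset.card_univ.symm
  have : Nonempty (F i) := ⟨a⟩
  rw [hfiber, Fintype.card_pi, ← Finset.mul_prod_erase _ _ (Finset.mem_univ i),
    Nat.mul_div_cancel_left _ Fintype.card_pos]

theorem ncard_setOf_apply_eq_of_ne_zero [DecidableEq ι] [Fintype ι] [∀ j, Zero (F j)]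
    [∀ j, Fintype (F j)] (i : ι) {a : F i} (ha : a ≠ 0) :
    {y : {f : ∀ j, F j // f ≠ 0} | (y : ∀ j, F j) i = a}.ncard =
      Fintype.card (∀ j, F j) / Fintype.card (F i) := by
  rw [← Nat.card_coe_set_eq, ← Nat.card_subtype_apply_eq i a]
  refine Nat.card_congr <|
    (Equiv.subtypeSubtypeEquivSubtypeInter (fun f : ∀ j, F j => f ≠ 0) (· i = a)).trans
      (Equiv.subtypeEquivRight fun f => and_iff_right_of_imp ?_)
  rintro hf rfl
  exact ha hf.symm

variable [∀ j, Field (F j)]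

theorem Pi.not_isUnit_one_sub_mul_iff (x y : ∀ j, F j) :
    ¬IsUnit (1 - x * y) ↔ ∃ j, x j * y j = 1 := by
  simp only [Pi.isUnit_iff, isUnit_iff_ne_zero, not_forall, not_not, Pi.sub_apply, Pi.one_apply,
    Pi.mul_apply, sub_eq_zero]
  exact exists_congr fun _ => eq_comm

theorem jacGraph_adj_iff {x y : {f : ∀ j, F j // f ≠ 0}} :
    (jacGraph F).Adj x y ↔ x ≠ y ∧ ∃ j, (x : ∀ j, F j) j * (y : ∀ j, F j) j = 1 :=
  and_congr_right' (Pi.not_isUnit_one_sub_mul_iff _ _)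

theorem jacGraph_adj_iff_of_eq_single [DecidableEq ι] {i : ι} {c : F i} (hc : c ≠ 0)
    {x y : {f : ∀ j, F j // f ≠ 0}} (hx : (x : ∀ j, F j) = Pi.single i c) :
    (jacGraph F).Adj x y ↔ x ≠ y ∧ (y : ∀ j, F j) i = c⁻¹ := by
  have hsupp : ∀ j, (x : ∀ j, F j) j * (y : ∀ j, F j) j = 1 ↔
      j = i ∧ (y : ∀ j, F j) i = c⁻¹ := by
    intro j
    rcases eq_or_ne j i with rfl | hji
    · simp [hx, mul_eq_one_iff_inv_eq₀ hc, eq_comm]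
    · simp [hx, hji]
  simp only [jacGraph_adj_iff, hsupp, exists_eq_left]

theorem jacGraph_neighborSet_of_eq_single [DecidableEq ι] {i : ι} {c : F i} (hc : c ≠ 0)
    {x : {f : ∀ j, F j // f ≠ 0}} (hx : (x : ∀ j, F j) = Pi.single i c) :
    (jacGraph F).neighborSet x =
      {y : {f : ∀ j, F j // f ≠ 0} | (y : ∀ j, F j) i = c⁻¹} \ {x} := by
  ext y
  simp [jacGraph_adj_iff_of_eq_single hc hx, and_comm, eq_comm]

end

theorem jacGraph_neighborSet_single
    {n : ℕ} (F : Fin n → Type*) [∀ i, Field (F i)] [∀ i, Fintype (F i)]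
    (i : Fin n) (c : F i) (hc : c ≠ 0)
    (x : {x : ∀ j, F j // x ≠ 0}) (hx : (x : ∀ j, F j) = Pi.single i c) :
    (jacGraph F).neighborSet x =
        {y : {x : ∀ j, F j // x ≠ 0} | (y : ∀ j, F j) i = c⁻¹} \ {x} ∧
      (c ^ 2 = 1 →
        ((jacGraph F).neighborSet x).ncard =
          Fintype.card (∀ j, F j) / Fintype.card (F i) - 1) ∧
      (c ^ 2 ≠ 1 →
        ((jacGraph F).neighborSet x).ncard =
          Fintype.card (∀ j, F j) / Fintype.card (F i)) := by
  have hnbhd := jacGraph_neighborSet_of_eq_single hc hx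
  have hcard := ncard_setOf_apply_eq_of_ne_zero i (inv_ne_zero hc)
  have hmem : x ∈ {y : {x : ∀ j, F j // x ≠ 0} | (y : ∀ j, F j) i = c⁻¹} ↔ c ^ 2 = 1 := by
    simp [hx, sq, ← mul_eq_one_iff_eq_inv₀ hc]
  refine ⟨hnbhd, fun hc2 => ?_, fun hc2 => ?_⟩
  · rw [hnbhd, Set.ncard_sdiff_singleton_of_mem (hmem.2 hc2), hcard]
  · rw [hnbhd, Set.sdiff_singleton_eq_self (mt hmem.1 hc2), hcard]
end

section
/- The rings Z/4Z and F_2[x]/(x²) are non-isomorphic but have isomorphic Jacobson graphs. -/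
/-- The Jacobson graph of a commutative ring: vertices are the elements
outside the Jacobson radical, two distinct vertices are adjacent iff
`1 - x*y` is not a unit. -/
def jacobsonGraph (R : Type*) [CommRing R] :
    SimpleGraph {x : R // x ∉ Ideal.jacobson (⊥ : Ideal R)} where
  Adj x y := x ≠ y ∧ ¬ IsUnit (1 - (x : R) * y)
  symm := ⟨by
    rintro x y ⟨hxy, hu⟩
    exact ⟨hxy.symm, by rwa [mul_comm]⟩⟩
  loopless := ⟨by rintro x ⟨h, _⟩; exact h rfl⟩

/-!
In `ℤ/4ℤ` we have `2 ≠ 0`, while `𝔽₂[x]/(x²)` has characteristic `2`, so the rings are not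
isomorphic. Both are `{0, 1}` plus nilpotents, so every `x` outside the Jacobson radical `J`
satisfies `1 - x ∈ J`. Then `1 - xy = (1 - x) + x(1 - y) ∈ J` for any two vertices, so the
Jacobson graph is complete; its vertices are exactly the units, and each ring has two of them.
-/

open Polynomial

theorem Set.nonempty_equiv_pair {α β : Type*} {a b : α} {c d : β} (hab : a ≠ b) (hcd : c ≠ d) :
    Nonempty (({a, b} : Set α) ≃ ({c, d} : Set β)) :=
  Finite.card_eq.mp ((Set.ncard_pair hab).trans (Set.ncard_pair hcd).symm)

section JacobsonGraph

variable {R : Type*} [CommRing R]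

theorem one_sub_mem_jacobson_bot_of_isNilpotent
    (h : ∀ x : R, IsNilpotent x ∨ IsNilpotent (1 - x)) {x : R}
    (hx : x ∉ Ideal.jacobson (⊥ : Ideal R)) : 1 - x ∈ Ideal.jacobson (⊥ : Ideal R) := by
  have hnil : ∀ y : R, IsNilpotent y → y ∈ Ideal.jacobson (⊥ : Ideal R) :=
    fun y hy => Ideal.radical_le_jacobson (mem_nilradical.mpr hy)
  exact hnil _ ((h x).resolve_left fun hn => hx (hnil x hn))

theorem jacobsonGraph_eq_top
    (hR : ∀ x ∉ Ideal.jacobson (⊥ : Ideal R), 1 - x ∈ Ideal.jacobson (⊥ : Ideal R)) :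
    jacobsonGraph R = ⊤ := by
  ext x y
  refine ⟨fun h => h.1, fun hne => ⟨hne, fun hu => x.2 ?_⟩⟩
  have hmem : 1 - (x : R) * y ∈ Ideal.jacobson (⊥ : Ideal R) := by
    rw [show 1 - (x : R) * y = (1 - x) + x * (1 - y) by ring]
    exact add_mem (hR x x.2) (Ideal.mul_mem_left _ _ (hR y y.2))
  simp [Ideal.eq_top_of_isUnit_mem _ hmem hu]

theorem not_mem_jacobson_bot_iff_isUnit [Nontrivial R]
    (hR : ∀ x ∉ Ideal.jacobson (⊥ : Ideal R), 1 - x ∈ Ideal.jacobson (⊥ : Ideal R)) {x : R} :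
    x ∉ Ideal.jacobson (⊥ : Ideal R) ↔ IsUnit x := by
  refine ⟨fun hx => ?_, fun hu hx => ?_⟩
  · simpa using Ideal.mem_jacobson_bot.mp (hR x hx) (-1)
  · exact bot_ne_top (Ideal.jacobson_eq_top_iff.mp (Ideal.eq_top_of_isUnit_mem _ hx hu))

theorem nonempty_jacobsonGraph_iso {S : Type*} [CommRing S] [Nontrivial R] [Nontrivial S]
    (hR : ∀ x ∉ Ideal.jacobson (⊥ : Ideal R), 1 - x ∈ Ideal.jacobson (⊥ : Ideal R))
    (hS : ∀ x ∉ Ideal.jacobson (⊥ : Ideal S), 1 - x ∈ Ideal.jacobson (⊥ : Ideal S))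
    (he : Nonempty ({x : R | IsUnit x} ≃ {x : S | IsUnit x})) :
    Nonempty (jacobsonGraph R ≃g jacobsonGraph S) := by
  obtain ⟨e⟩ := he
  rw [jacobsonGraph_eq_top hR, jacobsonGraph_eq_top hS]
  exact ⟨SimpleGraph.Iso.completeGraph <|
    (Equiv.subtypeEquivRight fun _ => not_mem_jacobson_bot_iff_isUnit hR).trans <|
      e.trans (Equiv.subtypeEquivRight fun _ => not_mem_jacobson_bot_iff_isUnit hS).symm⟩

end JacobsonGraph

theorem ZMod.four_one_sub_mem_jacobson_bot {x : ZMod 4}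
    (hx : x ∉ Ideal.jacobson (⊥ : Ideal (ZMod 4))) :
    1 - x ∈ Ideal.jacobson (⊥ : Ideal (ZMod 4)) := by
  refine one_sub_mem_jacobson_bot_of_isNilpotent (fun z => ?_) hx
  fin_cases z
  · exact .inl ⟨1, by decide⟩
  · exact .inr ⟨1, by decide⟩
  · exact .inl ⟨2, by decide⟩
  · exact .inr ⟨2, by decide⟩

theorem ZMod.four_setOf_isUnit : {x : ZMod 4 | IsUnit x} = {1, 3} := by
  ext x
  simp only [Set.mem_ofPred_eq, Set.mem_insert_iff, Set.mem_singleton_iff, isUnit_iff_exists_inv]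
  revert x
  decide

abbrev F2Dual := Polynomial (ZMod 2) ⧸ Ideal.span {(X : Polynomial (ZMod 2)) ^ 2}

namespace F2Dual

noncomputable def eps : F2Dual := Ideal.Quotient.mk _ X

theorem isNilpotent_eps : IsNilpotent eps :=
  ⟨2, Ideal.Quotient.eq_zero_iff_mem.mpr (Ideal.subset_span rfl)⟩

theorem eps_ne_zero : eps ≠ 0 := by
  rw [eps, Ne, Ideal.Quotient.eq_zero_iff_mem, Ideal.mem_span_singleton, X_pow_dvd_iff]
  intro h
  simpa using h 1 one_lt_two

instance : Nontrivial F2Dual := nontrivial_of_ne eps 0 eps_ne_zero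

theorem two_eq_zero : (2 : F2Dual) = 0 := by
  rw [← map_ofNat (algebraMap (ZMod 2) F2Dual) 2, show (2 : ZMod 2) = 0 from rfl, map_zero]

theorem eq_zero_or_eq_one_or_eq_eps_or_eq_one_add_eps (z : F2Dual) :
    z = 0 ∨ z = 1 ∨ z = eps ∨ z = 1 + eps := by
  obtain ⟨p, rfl⟩ := Ideal.Quotient.mk_surjective z
  have hlin : (Ideal.Quotient.mk _ p : F2Dual)
      = Ideal.Quotient.mk _ (C (p.coeff 0) + C (p.coeff 1) * X) := by
    rw [Ideal.Quotient.eq, Ideal.mem_span_singleton, X_pow_dvd_iff]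
    intro d hd
    interval_cases d <;> simp
  rw [hlin, map_add, map_mul, ← eps]
  have hZ2 : ∀ a : ZMod 2, a = 0 ∨ a = 1 := by decide
  rcases hZ2 (p.coeff 0) with h0 | h0 <;> rcases hZ2 (p.coeff 1) with h1 | h1 <;> simp [h0, h1]

theorem one_sub_mem_jacobson_bot {x : F2Dual} (hx : x ∉ Ideal.jacobson (⊥ : Ideal F2Dual)) :
    1 - x ∈ Ideal.jacobson (⊥ : Ideal F2Dual) := by
  refine one_sub_mem_jacobson_bot_of_isNilpotent (fun z => ?_) hx
  rcases eq_zero_or_eq_one_or_eq_eps_or_eq_one_add_eps z with rfl | rfl | rfl | rfl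
  · exact .inl IsNilpotent.zero
  · exact .inr (by simp)
  · exact .inl isNilpotent_eps
  · exact .inr (by simpa using isNilpotent_eps.neg)

theorem setOf_isUnit : {x : F2Dual | IsUnit x} = {1, 1 + eps} := by
  ext z
  refine ⟨fun hz => ?_, by rintro (rfl | rfl); exacts [isUnit_one, isNilpotent_eps.isUnit_one_add]⟩
  rcases eq_zero_or_eq_one_or_eq_eps_or_eq_one_add_eps z with rfl | rfl | rfl | rfl
  · exact absurd hz not_isUnit_zero
  · exact .inl rfl
  · exact absurd hz isNilpotent_eps.not_isUnit
  · exact .inr rfl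

end F2Dual

theorem zmod4_polyQuot_jacobsonGraph :
    ¬ Nonempty (ZMod 4 ≃+*
        (Polynomial (ZMod 2) ⧸ Ideal.span {(Polynomial.X : Polynomial (ZMod 2)) ^ 2})) ∧
      Nonempty (jacobsonGraph (ZMod 4) ≃g
        jacobsonGraph
          (Polynomial (ZMod 2) ⧸ Ideal.span {(Polynomial.X : Polynomial (ZMod 2)) ^ 2})) := by
  refine ⟨fun ⟨f⟩ => ?_, ?_⟩
  · have h2 : (2 : ZMod 4) = 0 := f.injective (by rw [map_ofNat, F2Dual.two_eq_zero, map_zero])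
    exact absurd h2 (by decide)
  · have : Fact (1 < 4) := ⟨by norm_num⟩
    refine nonempty_jacobsonGraph_iso (fun _ => ZMod.four_one_sub_mem_jacobson_bot)
      (fun _ => F2Dual.one_sub_mem_jacobson_bot) ?_
    rw [ZMod.four_setOf_isUnit, F2Dual.setOf_isUnit]
    exact Set.nonempty_equiv_pair (by decide) (by simpa using F2Dual.eps_ne_zero)
end

section
/- If p is the largest prime not exceeding n (n ≥ 2), then the exponent of p in n! is exactly 1. -/
open Nat

/-- Legendre's formula collapses to its first term once `n < p ^ 2`. -/
theorem Nat.factorization_factorial_eq_div_of_lt_sq {p n : ℕ} (hp : p.Prime) (hn : n < p ^ 2) :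
    (n)!.factorization p = n / p := by
  rw [factorization_factorial hp (log_lt_of_lt_pow' two_ne_zero hn)]
  simp

theorem Nat.factorization_factorial_eq_one_of_le_of_lt_two_mul {p n : ℕ} (hp : p.Prime)
    (hpn : p ≤ n) (hn : n < 2 * p) : (n)!.factorization p = 1 := by
  have hn_sq : n < p ^ 2 := hn.trans_le (by rw [sq]; exact Nat.mul_le_mul_right p hp.two_le)
  rw [factorization_factorial_eq_div_of_lt_sq hp hn_sq]
  exact Nat.div_eq_of_lt_le (by lia) (by lia)

/-- By Bertrand's postulate there is a prime in `(p, 2p]`, which must exceed `n`. -/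
theorem Nat.lt_two_mul_of_forall_prime_le {p n : ℕ} (hp : p.Prime)
    (hmax : ∀ q : ℕ, q.Prime → q ≤ n → q ≤ p) : n < 2 * p := by
  by_contra! h
  obtain ⟨q, hq, hpq, hq2p⟩ := bertrand p hp.ne_zero
  exact (hmax q hq (hq2p.trans h)).not_gt hpq

theorem factorization_factorial_largest_prime_general (p n : ℕ)
    (hp : p.Prime) (hpn : p ≤ n)
    (hmax : ∀ q : ℕ, q.Prime → q ≤ n → q ≤ p) :
    (Nat.factorial n).factorization p = 1 :=
  factorization_factorial_eq_one_of_le_of_lt_two_mul hp hpn (lt_two_mul_of_forall_prime_le hp hmax)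

/-- If `p` is the largest prime not exceeding `n` (with `n ≥ 2`), then `p`
divides `n!` exactly once. -/
theorem factorization_factorial_largest_prime (p n : ℕ) (hn : 2 ≤ n)
    (hp : p.Prime) (hpn : p ≤ n)
    (hmax : ∀ q : ℕ, q.Prime → q ≤ n → q ≤ p) :
    (Nat.factorial n).factorization p = 1 :=
  factorization_factorial_largest_prime_general p n hp hpn hmax
end

section
/- There are no natural numbers k > 1 and n > 1 satisfying k! = 2^(3n - ε_n)·n! where ε_n is the parity of n, except none exist: the equation k! = 2^(3n-ε_n)·n! with k, n > 1 has no solutions. -/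
/-!
If `k ! = 2 ^ e * n !` with `n, e ≥ 1`, then `k > n`, and `k ≥ n + 2` is impossible because one of
`n + 1`, `n + 2` is an odd number `≥ 3` dividing `2 ^ e`. Hence `k = n + 1` and `n + 1 = 2 ^ e`;
but here `e = 3n - ε_n ≥ n + 1`, so `2 ^ e > n + 1`.
-/

namespace Nat

theorem eq_one_of_odd_of_dvd_two_pow {d e : ℕ} (hd : Odd d) (hde : d ∣ 2 ^ e) : d = 1 :=
  (hd.coprime_two_right.pow_right e).eq_one_of_dvd hde

theorem eq_zero_of_succ_mul_succ_succ_dvd_two_pow {n e : ℕ} (h : (n + 1) * (n + 2) ∣ 2 ^ e) :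
    n = 0 := by
  rcases even_or_odd n with hn | hn
  · have : n + 1 = 1 :=
      eq_one_of_odd_of_dvd_two_pow hn.add_one (dvd_of_mul_right_dvd h)
    omega
  · have : n + 2 = 1 :=
      eq_one_of_odd_of_dvd_two_pow (hn.add_odd odd_one |>.add_one) (dvd_of_mul_left_dvd h)
    omega

theorem add_one_eq_two_pow_of_factorial_eq {k n e : ℕ} (hn : 0 < n) (he : 0 < e)
    (h : k ! = 2 ^ e * n !) : n + 1 = 2 ^ e := by
  have hnk : n < k := by
    refine (factorial_lt hn).mp (h ▸ ?_)
    exact lt_mul_left (factorial_pos n) (Nat.one_lt_two_pow he.ne')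
  obtain rfl | hk := (succ_le_of_lt hnk).eq_or_lt
  · rw [factorial_succ] at h
    exact eq_of_mul_eq_mul_right (factorial_pos n) h
  · have hdvd : (n + 2)! ∣ k ! := factorial_dvd_factorial hk
    have hfac : (n + 2)! = n ! * ((n + 1) * (n + 2)) := by
      simp only [factorial_succ]; ring
    rw [hfac, h, mul_comm (2 ^ e)] at hdvd
    have := eq_zero_of_succ_mul_succ_succ_dvd_two_pow <|
      (Nat.mul_dvd_mul_iff_left (factorial_pos n)).mp hdvd
    omega

end Nat

theorem no_solution_factorial_eq_general (k n : ℕ) (hn : 1 < n) :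
    Nat.factorial k ≠
      2 ^ (3 * n - (if Odd n then 1 else 0)) * Nat.factorial n := by
  intro h
  have he : n + 1 ≤ 3 * n - (if Odd n then 1 else 0) := by split_ifs <;> omega
  have hsucc := Nat.add_one_eq_two_pow_of_factorial_eq (by omega) (by omega) h
  have : n + 1 < 2 ^ (n + 1) := Nat.lt_two_pow_self
  have : 2 ^ (n + 1) ≤ 2 ^ (3 * n - (if Odd n then 1 else 0)) :=
    Nat.pow_le_pow_right two_pos he
  omega

theorem no_solution_factorial_eq (k n : ℕ) (hk : 1 < k) (hn : 1 < n) :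
    Nat.factorial k ≠
      2 ^ (3 * n - (if Odd n then 1 else 0)) * Nat.factorial n :=
  no_solution_factorial_eq_general k n hn
end

section
/- For natural numbers k, m̂ > 1, the equation k! = 2^(m̂ - ε_{m̂})·m̂! holds if and only if (k, m̂) = (4, 3), where ε_{m̂} is the parity of m̂. -/
/-!
Write `e = m - ε_m`, so `m - 1 ≤ e` and `2 ≤ 2 ^ e`. From `k ! = 2 ^ e * m !` we get `m < k`;
if `m + 2 ≤ k` then `(m + 1) (m + 2)` divides `2 ^ e`, impossible since one of the two factors is
odd and larger than `1`. Hence `k = m + 1` and `m + 1 = 2 ^ e ≥ 2 ^ (m - 1)`, which forces `m ≤ 3`;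
checking `m = 2, 3` leaves `(k, m) = (4, 3)`.
-/

open Nat

namespace Nat

theorem eq_one_of_odd_of_dvd_two_pow_s16 {a e : ℕ} (ha : Odd a) (h : a ∣ 2 ^ e) : a = 1 :=
  (ha.coprime_two_right.pow_right e).eq_one_of_dvd h

theorem not_succ_mul_succ_succ_dvd_two_pow {n : ℕ} (hn : 1 ≤ n) (e : ℕ) :
    ¬ (n + 1) * (n + 2) ∣ 2 ^ e := by
  intro h
  rcases Nat.even_or_odd n with hn_even | hn_odd
  · have := eq_one_of_odd_of_dvd_two_pow_s16 hn_even.add_one (dvd_of_mul_right_dvd h)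
    omega
  · have := eq_one_of_odd_of_dvd_two_pow_s16 (hn_odd.add_even even_two) (dvd_of_mul_left_dvd h)
    omega

theorem lt_of_factorial_eq_mul_factorial {k m a : ℕ} (ha : 1 < a) (h : k ! = a * m !) :
    m < k :=
  lt_of_not_ge fun hk => (factorial_le hk).not_gt (h ▸ lt_mul_of_one_lt_left m.factorial_pos ha)

theorem le_succ_of_factorial_eq_two_pow_mul_factorial {k m e : ℕ} (hm : 1 ≤ m)
    (h : k ! = 2 ^ e * m !) : k ≤ m + 1 := by
  by_contra! hk
  have hdvd : (m + 2) ! ∣ 2 ^ e * m ! := h ▸ factorial_dvd_factorial hk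
  rw [factorial_succ, factorial_succ, ← mul_assoc, mul_comm (m + 2)] at hdvd
  exact not_succ_mul_succ_succ_dvd_two_pow hm e
    (Nat.dvd_of_mul_dvd_mul_right m.factorial_pos hdvd)

theorem succ_lt_two_pow_pred {m : ℕ} (hm : 4 ≤ m) : m + 1 < 2 ^ (m - 1) := by
  induction m, hm using Nat.le_induction with
  | base => norm_num
  | succ n hn ih =>
    rw [show n + 1 - 1 = n - 1 + 1 by omega, pow_succ]
    omega

end Nat

theorem factorial_eq_two_pow_mul_factorial_iff_general (k m : ℕ) (hm : 1 < m) :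
    Nat.factorial k = 2 ^ (m - (if Odd m then 1 else 0)) * Nat.factorial m ↔
      k = 4 ∧ m = 3 := by
  constructor
  · intro h
    obtain ⟨e, he_ge, h⟩ : ∃ e, m - 1 ≤ e ∧ k ! = 2 ^ e * m ! := ⟨_, by split <;> omega, h⟩
    have hm_lt : m < k :=
      lt_of_factorial_eq_mul_factorial (Nat.one_lt_two_pow (by omega)) h
    obtain rfl : k = m + 1 :=
      le_antisymm (le_succ_of_factorial_eq_two_pow_mul_factorial hm.le h) hm_lt
    have hpow : m + 1 = 2 ^ e := by
      rw [factorial_succ] at h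
      exact Nat.eq_of_mul_eq_mul_right m.factorial_pos h
    have hm_le : m ≤ 3 := by
      by_contra! hm4
      have := Nat.pow_le_pow_right two_pos he_ge
      have := succ_lt_two_pow_pred hm4
      omega
    interval_cases m
    · have := eq_one_of_odd_of_dvd_two_pow_s16 (a := 2 + 1) (e := e) (by decide) ⟨1, by omega⟩
      omega
    · exact ⟨rfl, rfl⟩
  · rintro ⟨rfl, rfl⟩
    decide

theorem factorial_eq_two_pow_mul_factorial_iff (k m : ℕ) (hk : 1 < k) (hm : 1 < m) :
    Nat.factorial k = 2 ^ (m - (if Odd m then 1 else 0)) * Nat.factorial m ↔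
      k = 4 ∧ m = 3 :=
  factorial_eq_two_pow_mul_factorial_iff_general k m hm
end

section
/- For natural numbers m̂, m̂' > 1, if 2^(m̂ - ε_{m̂})·m̂! = 2^(m̂' - ε_{m̂'})·m̂'! then m̂ = m̂', where ε_j is the parity of j. -/
/-! Since `m - ε_m = 2 ⌊m/2⌋`, the quantity equals `4 ^ ⌊m/2⌋ * m!`: a monotone factor times
`m!`, which is strictly increasing for `m ≥ 1`. -/

open Nat

theorem two_pow_sub_parity_eq_four_pow_div_two (m : ℕ) :
    2 ^ (m - if Odd m then 1 else 0) = 4 ^ (m / 2) := by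
  have hexp : m - (if Odd m then 1 else 0) = 2 * (m / 2) := by
    split_ifs with hodd
    · rw [Nat.odd_iff] at hodd; omega
    · rw [Nat.not_odd_iff] at hodd; omega
  rw [hexp, pow_mul]
  norm_num

theorem pow_div_two_mul_factorial_strictMonoOn {c : ℕ} (hc : 0 < c) :
    StrictMonoOn (fun m => c ^ (m / 2) * m !) (Set.Ici 1) := by
  intro a ha b _ hab
  exact Nat.mul_lt_mul_of_le_of_lt (Nat.pow_le_pow_right hc (Nat.div_le_div_right hab.le))
    ((Nat.factorial_lt ha).2 hab) (by positivity)

theorem two_pow_mul_factorial_injective (m m' : ℕ) (hm : 1 < m) (hm' : 1 < m')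
    (h : 2 ^ (m - (if Odd m then 1 else 0)) * Nat.factorial m =
      2 ^ (m' - (if Odd m' then 1 else 0)) * Nat.factorial m') :
    m = m' := by
  rw [two_pow_sub_parity_eq_four_pow_div_two, two_pow_sub_parity_eq_four_pow_div_two] at h
  exact (pow_div_two_mul_factorial_strictMonoOn (by norm_num)).injOn
    (Set.mem_Ici.2 hm.le) (Set.mem_Ici.2 hm'.le) h
end

section
/- Let R = (Z/2Z)^n be the product of n copies of the field with two elements, n ≥ 2. Then the automorphism group of the Jacobson graph of R is isomorphic to the symmetric group S_n, acting by permuting coordinates. -/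
/-- The Jacobson graph of `(Z/2)^n`: vertices are the nonzero elements,
two distinct vertices are adjacent iff `1 - x*y` is not a unit. -/
def jacGraph2 (n : ℕ) : SimpleGraph {x : Fin n → ZMod 2 // x ≠ 0} where
  Adj x y := x ≠ y ∧ ¬ IsUnit (1 - (x : Fin n → ZMod 2) * y)
  symm := by
    constructor
    rintro x y ⟨hxy, hu⟩
    exact ⟨hxy.symm, by rwa [mul_comm]⟩
  loopless := by constructor; rintro x ⟨h, _⟩; exact h rfl

/-- The automorphism group of a simple graph. -/
instance graphAutGroup {V : Type*} (G : SimpleGraph V) : Group (G ≃g G) where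
  mul f g := g.trans f
  one := SimpleGraph.Iso.refl
  inv f := f.symm
  mul_assoc f g h := rfl
  one_mul f := rfl
  mul_one f := rfl
  inv_mul_cancel f := by
    ext x
    exact f.symm_apply_apply x

/-! The closed neighbourhood of a vertex `x` consists of the vertices whose support meets
that of `x`; testing against the unit vectors `single i` shows that `N[x] ⊆ N[y]` iff
`supp x ⊆ supp y`. Hence every automorphism preserves inclusion of supports, so it permutes the
minimal vertices `single i`, and since a vertex is determined by the unit vectors below it, the
automorphism is the coordinate permutation it induces on them. Conversely every coordinate
permutation is an automorphism, and the two constructions are mutually inverse. -/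

namespace SimpleGraph

variable {V W : Type*} {G : SimpleGraph V} {H : SimpleGraph W}

def closedNeighborSet (G : SimpleGraph V) (v : V) : Set V := insert v (G.neighborSet v)

lemma Iso.image_closedNeighborSet (φ : G ≃g H) (v : V) :
    φ '' G.closedNeighborSet v = H.closedNeighborSet (φ v) := by
  rw [closedNeighborSet, Set.image_insert_eq, φ.image_neighborSet]
  rfl

lemma Iso.closedNeighborSet_subset_iff (φ : G ≃g H) {u v : V} :
    H.closedNeighborSet (φ u) ⊆ H.closedNeighborSet (φ v) ↔
      G.closedNeighborSet u ⊆ G.closedNeighborSet v := by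
  rw [← φ.image_closedNeighborSet, ← φ.image_closedNeighborSet,
    Set.image_subset_image_iff φ.injective]

end SimpleGraph

namespace jacGraph2

open SimpleGraph

variable {n : ℕ}

abbrev Vertex (n : ℕ) := {x : Fin n → ZMod 2 // x ≠ 0}

def supp (x : Vertex n) : Set (Fin n) := Function.support (x : Fin n → ZMod 2)

lemma supp_nonempty (x : Vertex n) : (supp x).Nonempty :=
  Function.support_nonempty_iff.mpr x.2

lemma supp_injective : Function.Injective (supp (n := n)) := by
  intro x y h
  have eq_of_ne_zero_iff : ∀ a b : ZMod 2, (a ≠ 0 ↔ b ≠ 0) → a = b := by decide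
  exact Subtype.ext <| funext fun i => eq_of_ne_zero_iff _ _ (Set.ext_iff.mp h i)

lemma adj_iff {x y : Vertex n} :
    (jacGraph2 n).Adj x y ↔ x ≠ y ∧ (supp x ∩ supp y).Nonempty := by
  have not_isUnit_iff : ∀ a b : ZMod 2, ¬IsUnit (1 - a * b) ↔ a ≠ 0 ∧ b ≠ 0 := by
    decide
  simp only [jacGraph2, Pi.isUnit_iff, not_forall, Pi.sub_apply, Pi.one_apply, Pi.mul_apply,
    not_isUnit_iff]
  rfl

lemma mem_closedNeighborSet_iff {x y : Vertex n} :
    y ∈ (jacGraph2 n).closedNeighborSet x ↔ (supp x ∩ supp y).Nonempty := by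
  rw [closedNeighborSet, Set.mem_insert_iff, mem_neighborSet, adj_iff]
  constructor
  · rintro (rfl | ⟨-, h⟩)
    · simpa using supp_nonempty y
    · exact h
  · intro h
    by_cases hxy : y = x
    · exact .inl hxy
    · exact .inr ⟨Ne.symm hxy, h⟩

def single (i : Fin n) : Vertex n := ⟨Pi.single i 1, by simp⟩

lemma supp_single (i : Fin n) : supp (single i) = {i} :=
  Pi.support_single_of_ne one_ne_zero

lemma single_injective : Function.Injective (single (n := n)) := fun i j h => by
  simpa [supp_single] using congrArg supp h

lemma closedNeighborSet_subset_iff {x y : Vertex n} :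
    (jacGraph2 n).closedNeighborSet x ⊆ (jacGraph2 n).closedNeighborSet y ↔
      supp x ⊆ supp y := by
  constructor
  · intro h i hi
    have hsingle : single i ∈ (jacGraph2 n).closedNeighborSet y :=
      h (mem_closedNeighborSet_iff.mpr ⟨i, hi, by simp [supp_single]⟩)
    simpa [mem_closedNeighborSet_iff, supp_single] using hsingle
  · intro h z hz
    exact mem_closedNeighborSet_iff.mpr ((mem_closedNeighborSet_iff.mp hz).mono
      (Set.inter_subset_inter_left _ h))

lemma supp_apply_subset_iff (φ : jacGraph2 n ≃g jacGraph2 n) {x y : Vertex n} :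
    supp (φ x) ⊆ supp (φ y) ↔ supp x ⊆ supp y := by
  rw [← closedNeighborSet_subset_iff, ← closedNeighborSet_subset_iff,
    φ.closedNeighborSet_subset_iff]

lemma eq_single_of_supp_subset {x : Vertex n} {i : Fin n} (h : supp x ⊆ {i}) : x = single i :=
  supp_injective <| by rw [supp_single, ← (supp_nonempty x).subset_singleton_iff]; exact h

lemma exists_apply_single_eq (φ : jacGraph2 n ≃g jacGraph2 n) (i : Fin n) :
    ∃ j, φ (single i) = single j := by
  obtain ⟨j, hj⟩ := supp_nonempty (φ (single i))
  refine ⟨j, ?_⟩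
  have h : supp (φ (φ.symm (single j))) ⊆ supp (φ (single i)) := by
    rwa [φ.apply_symm_apply, supp_single, Set.singleton_subset_iff]
  rw [supp_apply_subset_iff, supp_single] at h
  rw [← eq_single_of_supp_subset h, φ.apply_symm_apply]

noncomputable def singleIndex (φ : jacGraph2 n ≃g jacGraph2 n) (i : Fin n) : Fin n :=
  (exists_apply_single_eq φ i).choose

lemma apply_single (φ : jacGraph2 n ≃g jacGraph2 n) (i : Fin n) :
    φ (single i) = single (singleIndex φ i) :=
  (exists_apply_single_eq φ i).choose_spec

lemma singleIndex_eq {φ : jacGraph2 n ≃g jacGraph2 n} {i j : Fin n}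
    (h : φ (single i) = single j) : singleIndex φ i = j :=
  single_injective (by rw [← apply_single φ, h])

noncomputable def isoPerm (φ : jacGraph2 n ≃g jacGraph2 n) : Equiv.Perm (Fin n) where
  toFun := singleIndex φ
  invFun := singleIndex φ.symm
  left_inv i := singleIndex_eq (by rw [← apply_single φ, φ.symm_apply_apply])
  right_inv i := singleIndex_eq (by rw [← apply_single φ.symm, φ.apply_symm_apply])

lemma isoPerm_apply (φ : jacGraph2 n ≃g jacGraph2 n) (i : Fin n) :
    isoPerm φ i = singleIndex φ i :=
  rfl

lemma apply_mem_supp_iff (φ : jacGraph2 n ≃g jacGraph2 n) (x : Vertex n) (i : Fin n) :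
    isoPerm φ i ∈ supp (φ x) ↔ i ∈ supp x := by
  rw [← Set.singleton_subset_iff, ← Set.singleton_subset_iff, ← supp_single, ← supp_single,
    isoPerm_apply, ← apply_single, supp_apply_subset_iff]

lemma supp_apply (φ : jacGraph2 n ≃g jacGraph2 n) (x : Vertex n) :
    supp (φ x) = isoPerm φ '' supp x := by
  ext j
  obtain ⟨i, rfl⟩ := (isoPerm φ).surjective j
  rw [(isoPerm φ).injective.mem_set_image, apply_mem_supp_iff]

def permEquiv (σ : Equiv.Perm (Fin n)) : Vertex n ≃ Vertex n :=
  (σ.arrowCongr (Equiv.refl (ZMod 2))).subtypeEquiv fun x => by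
    simpa [funext_iff] using σ.symm.surjective.exists

lemma supp_permEquiv (σ : Equiv.Perm (Fin n)) (x : Vertex n) :
    supp (permEquiv σ x) = σ '' supp x := by
  rw [Equiv.image_eq_preimage_symm]
  rfl

def permIso (σ : Equiv.Perm (Fin n)) : jacGraph2 n ≃g jacGraph2 n where
  toEquiv := permEquiv σ
  map_rel_iff' {x y} := by
    simp only [adj_iff, supp_permEquiv, ← Set.image_inter σ.injective, Set.image_nonempty,
      (permEquiv σ).injective.ne_iff]

lemma supp_permIso (σ : Equiv.Perm (Fin n)) (x : Vertex n) : supp (permIso σ x) = σ '' supp x :=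
  supp_permEquiv σ x

lemma permIso_single (σ : Equiv.Perm (Fin n)) (i : Fin n) :
    permIso σ (single i) = single (σ i) :=
  supp_injective <| by rw [supp_permIso, supp_single, supp_single, Set.image_singleton]

lemma isoPerm_eq {φ : jacGraph2 n ≃g jacGraph2 n} {σ : Equiv.Perm (Fin n)}
    (h : ∀ i, φ (single i) = single (σ i)) : isoPerm φ = σ :=
  Equiv.ext fun i => singleIndex_eq (h i)

noncomputable def autEquivPerm : (jacGraph2 n ≃g jacGraph2 n) ≃* Equiv.Perm (Fin n) where
  toFun := isoPerm
  invFun := permIso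
  left_inv φ := RelIso.ext fun x => supp_injective <| by
    rw [supp_permIso, supp_apply]
  right_inv σ := isoPerm_eq (permIso_single σ)
  map_mul' φ ψ := isoPerm_eq fun i => by
    change φ (ψ (single i)) = _
    rw [apply_single ψ, apply_single φ]
    rfl

end jacGraph2

theorem jacGraph2_aut_general (n : ℕ) :
    Nonempty ((jacGraph2 n ≃g jacGraph2 n) ≃* Equiv.Perm (Fin n)) :=
  ⟨jacGraph2.autEquivPerm⟩

/-- The automorphism group of the Jacobson graph of `(Z/2)^n` is the
symmetric group `S_n`, acting by permuting coordinates. -/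
theorem jacGraph2_aut (n : ℕ) (hn : 2 ≤ n) :
    Nonempty ((jacGraph2 n ≃g jacGraph2 n) ≃* Equiv.Perm (Fin n)) :=
  jacGraph2_aut_general n
end
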